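/- Let f : ℝⁿ → ℝ be continuously differentiable with L-Lipschitz gradient, fix u ∈ ℝⁿ with g := ∇f(u) ≠ 0, let H be symmetric positive semidefinite with ‖H‖ ≤ M_H, γ > 0, η ∈ (0,1), θ ∈ [0,1), m_γ(s) = f(u) + gᵀs + (1/2)sᵀ(H + γI)s, and let s satisfy (H + γI)s = −g + t with ‖t‖ ≤ θ√(γ/(‖H‖+γ))‖g‖. If the iteration is unsuccessful, i.e. f(u + s) − f(u) > η(m_γ(s) − m_γ(0)), then (1 − η)(1 − θ²) γ² < (1 + θ)² (L − γ)(M_H + γ); in particular γ < L. -/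

import Mathlib

/-!
Write `A = H + γ I`, so that `γ ≤ A ≤ ‖H‖ + γ`, and let `Δ = -2⟪g, s⟫ - ⟪s, A s⟫` be twice the
model decrease `m_γ(0) - m_γ(s)`. The descent lemma `f (u + s) ≤ f u + ⟪g, s⟫ + L ‖s‖² / 2` turns
the failure of the acceptance test into `(1 - η) Δ < (L - γ) ‖s‖²`. With `p = A⁻¹ g` one has
`s = A⁻¹ t - p`, hence `Δ = ⟪A⁻¹ g, g⟫ - ⟪A⁻¹ t, t⟫ ≥ (1 - θ²) ‖g‖² / (‖H‖ + γ) > 0`, by the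
bounds on `A` and on the residual `t`. Positivity of `Δ` forces `γ < L`, and combining both
estimates with `γ ‖s‖ ≤ ‖A s‖ ≤ (1 + θ) ‖g‖` gives the inequality.
-/

open Matrix Set
open scoped Matrix.Norms.L2Operator RealInnerProductSpace Gradient

section InnerProductSpace

variable {E : Type*} [NormedAddCommGroup E] [InnerProductSpace ℝ E]

theorem hasDerivAt_comp_add_smul_of_differentiableAt [CompleteSpace E] {f : E → ℝ} {x s : E}
    {τ : ℝ} (hf : DifferentiableAt ℝ f (x + τ • s)) :
    HasDerivAt (fun τ : ℝ => f (x + τ • s)) ⟪∇ f (x + τ • s), s⟫ τ := by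
  have hline : HasDerivAt (fun τ : ℝ => x + τ • s) s τ := by
    simpa using ((hasDerivAt_id τ).smul_const s).const_add x
  have h := hf.hasFDerivAt.comp_hasDerivAt τ hline
  rwa [hf.hasGradientAt.fderiv_apply] at h

theorem le_add_inner_gradient_add_of_lipschitz_gradient [CompleteSpace E] {f : E → ℝ}
    (hf : Differentiable ℝ f) {L : ℝ} (hLip : ∀ x y, ‖∇ f x - ∇ f y‖ ≤ L * ‖x - y‖) (x s : E) :
    f (x + s) ≤ f x + ⟪∇ f x, s⟫ + L / 2 * ‖s‖ ^ 2 := by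
  let φ : ℝ → ℝ := fun τ => f (x + τ • s) - τ * ⟪∇ f x, s⟫ - L / 2 * τ ^ 2 * ‖s‖ ^ 2
  have hφ (τ : ℝ) : HasDerivAt φ (⟪∇ f (x + τ • s) - ∇ f x, s⟫ - L * τ * ‖s‖ ^ 2) τ := by
    refine (((hasDerivAt_comp_add_smul_of_differentiableAt (hf _)).sub
      ((hasDerivAt_id τ).mul_const ⟪∇ f x, s⟫)).sub
      (((hasDerivAt_pow 2 τ).const_mul (L / 2)).mul_const (‖s‖ ^ 2))).congr_deriv ?_
    simp only [inner_sub_left]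
    ring
  have hφ_anti : AntitoneOn φ (Icc 0 1) := by
    refine antitoneOn_of_deriv_nonpos (convex_Icc 0 1)
      (fun τ _ => (hφ τ).continuousAt.continuousWithinAt)
      (fun τ _ => (hφ τ).differentiableAt.differentiableWithinAt) fun τ hτ => ?_
    rw [interior_Icc] at hτ
    rw [(hφ τ).deriv, sub_nonpos]
    calc ⟪∇ f (x + τ • s) - ∇ f x, s⟫ ≤ ‖∇ f (x + τ • s) - ∇ f x‖ * ‖s‖ :=
          real_inner_le_norm _ _
      _ ≤ L * ‖τ • s‖ * ‖s‖ := by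
          gcongr
          simpa using hLip (x + τ • s) x
      _ = L * τ * ‖s‖ ^ 2 := by
          rw [norm_smul, Real.norm_of_nonneg hτ.1.le]
          ring
  have h01 := hφ_anti (left_mem_Icc.2 zero_le_one) (right_mem_Icc.2 zero_le_one) zero_le_one
  simp only [φ, zero_smul, add_zero, one_smul] at h01
  linarith

theorem model_decrease_lt_of_unsuccessful [CompleteSpace E] {f : E → ℝ} (hf : Differentiable ℝ f)
    {L : ℝ} (hLip : ∀ x y, ‖∇ f x - ∇ f y‖ ≤ L * ‖x - y‖) {A : E →ₗ[ℝ] E} {γ η : ℝ} {u s : E}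
    (hs : γ * ‖s‖ ^ 2 ≤ ⟪s, A s⟫)
    (hunsucc : f (u + s) - f u > η * (⟪∇ f u, s⟫ + 1 / 2 * ⟪s, A s⟫)) :
    (1 - η) * (-(2 * ⟪∇ f u, s⟫) - ⟪s, A s⟫) < (L - γ) * ‖s‖ ^ 2 := by
  linarith [le_add_inner_gradient_add_of_lipschitz_gradient hf hLip u s]

variable {A : E →ₗ[ℝ] E} {γ : ℝ}

theorem LinearMap.mul_norm_le_norm_apply_of_coercive (hcoer : ∀ x, γ * ‖x‖ ^ 2 ≤ ⟪x, A x⟫)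
    (x : E) : γ * ‖x‖ ≤ ‖A x‖ := by
  rcases (norm_nonneg x).eq_or_lt with hx | hx
  · rw [← hx, mul_zero]
    exact norm_nonneg _
  refine le_of_mul_le_mul_right ?_ hx
  calc γ * ‖x‖ * ‖x‖ = γ * ‖x‖ ^ 2 := by ring
    _ ≤ ⟪x, A x⟫ := hcoer x
    _ ≤ ‖x‖ * ‖A x‖ := real_inner_le_norm _ _
    _ = ‖A x‖ * ‖x‖ := mul_comm _ _

theorem LinearMap.surjective_of_coercive [FiniteDimensional ℝ E] (hγ : 0 < γ)
    (hcoer : ∀ x, γ * ‖x‖ ^ 2 ≤ ⟪x, A x⟫) : Function.Surjective A := by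
  refine LinearMap.injective_iff_surjective.mp <| (injective_iff_map_eq_zero A).mpr fun x hx => ?_
  have h := A.mul_norm_le_norm_apply_of_coercive hcoer x
  rw [hx, norm_zero] at h
  exact norm_le_zero_iff.mp (nonpos_of_mul_nonpos_right h hγ)

theorem LinearMap.mul_inner_le_sq_norm_of_coercive (hγ : 0 ≤ γ)
    (hcoer : ∀ x, γ * ‖x‖ ^ 2 ≤ ⟪x, A x⟫) {q t : E} (hq : A q = t) : γ * ⟪q, t⟫ ≤ ‖t‖ ^ 2 :=
  calc γ * ⟪q, t⟫ ≤ γ * (‖q‖ * ‖t‖) := by gcongr; exact real_inner_le_norm q t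
    _ = γ * ‖q‖ * ‖t‖ := by ring
    _ ≤ ‖t‖ * ‖t‖ := by gcongr; exact hq ▸ A.mul_norm_le_norm_apply_of_coercive hcoer q
    _ = ‖t‖ ^ 2 := by ring

/-- Expand `0 ≤ ⟪x - p, A (x - p)⟫`: `⟪A⁻¹ g, g⟫` is the maximum of `2⟪g, x⟫ - ⟪x, A x⟫`. -/
theorem LinearMap.IsPositive.two_mul_inner_sub_le_inner_of_apply_eq (hA : A.IsPositive)
    {p g : E} (hp : A p = g) (x : E) : 2 * ⟪g, x⟫ - ⟪x, A x⟫ ≤ ⟪p, g⟫ := by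
  have h := hA.re_inner_nonneg_right (x - p)
  have hpx : ⟪p, A x⟫ = ⟪g, x⟫ := by rw [← hA.isSymmetric, hp]
  simp only [map_sub, inner_sub_left, inner_sub_right, hp, hpx, RCLike.re_to_real] at h
  rw [real_inner_comm g x] at h
  linarith

theorem LinearMap.IsPositive.sq_norm_le_mul_inner_of_apply_eq (hA : A.IsPositive) {Λ : ℝ}
    (hΛ : 0 < Λ) {p g : E} (hg : ⟪g, A g⟫ ≤ Λ * ‖g‖ ^ 2) (hp : A p = g) :
    ‖g‖ ^ 2 ≤ Λ * ⟪p, g⟫ := by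
  have h := hA.two_mul_inner_sub_le_inner_of_apply_eq hp (Λ⁻¹ • g)
  rw [map_smul, inner_smul_left, inner_smul_right, inner_smul_right,
    real_inner_self_eq_norm_sq, RCLike.conj_to_real] at h
  have hΛg : Λ⁻¹ * ⟪g, A g⟫ ≤ ‖g‖ ^ 2 := (inv_mul_le_iff₀ hΛ).mpr hg
  calc ‖g‖ ^ 2 = Λ * (2 * (Λ⁻¹ * ‖g‖ ^ 2) - Λ⁻¹ * ‖g‖ ^ 2) := by field_simp; ring
    _ ≤ Λ * (2 * (Λ⁻¹ * ‖g‖ ^ 2) - Λ⁻¹ * (Λ⁻¹ * ⟪g, A g⟫)) := by gcongr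
    _ ≤ Λ * ⟪p, g⟫ := by gcongr

theorem LinearMap.IsSymmetric.sq_norm_le_mul_model_decrease [FiniteDimensional ℝ E]
    (hA : A.IsSymmetric) (hγ : 0 < γ) (hcoer : ∀ x, γ * ‖x‖ ^ 2 ≤ ⟪x, A x⟫) {Λ θ : ℝ}
    (hΛ : 0 < Λ) (hbdd : ∀ x, ⟪x, A x⟫ ≤ Λ * ‖x‖ ^ 2) {g s t : E} (hstep : A s = -g + t)
    (ht : Λ * ‖t‖ ^ 2 ≤ θ ^ 2 * γ * ‖g‖ ^ 2) :
    (1 - θ ^ 2) * ‖g‖ ^ 2 ≤ Λ * (-(2 * ⟪g, s⟫) - ⟪s, A s⟫) := by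
  obtain ⟨p, hp⟩ := A.surjective_of_coercive hγ hcoer g
  have ht_eq : t = A s + g := by rw [hstep]; abel
  have hq : A (p + s) = t := by rw [map_add, hp, ht_eq, add_comm]
  have hdecrease : -(2 * ⟪g, s⟫) - ⟪s, A s⟫ = ⟪p, g⟫ - ⟪p + s, t⟫ := by
    have hps : ⟪p, A s⟫ = ⟪g, s⟫ := by rw [← hA, hp]
    rw [ht_eq, inner_add_left, inner_add_right, inner_add_right, hps, real_inner_comm g s]
    ring
  have hApos : A.IsPositive := ⟨hA, fun x => by
    simpa [real_inner_comm] using (by positivity : 0 ≤ γ * ‖x‖ ^ 2).trans (hcoer x)⟩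
  have hg := hApos.sq_norm_le_mul_inner_of_apply_eq hΛ (hbdd g) hp
  have htq : Λ * ⟪p + s, t⟫ ≤ θ ^ 2 * ‖g‖ ^ 2 := by
    refine le_of_mul_le_mul_left ?_ hγ
    calc γ * (Λ * ⟪p + s, t⟫) = Λ * (γ * ⟪p + s, t⟫) := by ring
      _ ≤ Λ * ‖t‖ ^ 2 := by gcongr; exact A.mul_inner_le_sq_norm_of_coercive hγ.le hcoer hq
      _ ≤ γ * (θ ^ 2 * ‖g‖ ^ 2) := by linarith
  rw [hdecrease]
  linarith

end InnerProductSpace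

namespace Matrix

variable {m : Type*} [Fintype m] [DecidableEq m]

theorem inner_toEuclideanLin_add_smul_one (H : Matrix m m ℝ) (γ : ℝ) (x : EuclideanSpace ℝ m) :
    ⟪x, toEuclideanLin (H + γ • 1) x⟫ = ⟪x, toEuclideanLin H x⟫ + γ * ‖x‖ ^ 2 := by
  simp [inner_add_right, inner_smul_right]

theorem PosSemidef.inner_toEuclideanLin_nonneg {H : Matrix m m ℝ} (hH : H.PosSemidef)
    (x : EuclideanSpace ℝ m) : 0 ≤ ⟪x, toEuclideanLin H x⟫ :=
  (isPositive_toEuclideanLin_iff.mpr hH).re_inner_nonneg_right x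

theorem PosSemidef.mul_sq_norm_le_inner_toEuclideanLin_add_smul_one {H : Matrix m m ℝ}
    (hH : H.PosSemidef) (γ : ℝ) (x : EuclideanSpace ℝ m) :
    γ * ‖x‖ ^ 2 ≤ ⟪x, toEuclideanLin (H + γ • 1) x⟫ := by
  rw [inner_toEuclideanLin_add_smul_one]
  linarith [hH.inner_toEuclideanLin_nonneg x]

theorem inner_toEuclideanLin_add_smul_one_le (H : Matrix m m ℝ) (γ : ℝ)
    (x : EuclideanSpace ℝ m) : ⟪x, toEuclideanLin (H + γ • 1) x⟫ ≤ (‖H‖ + γ) * ‖x‖ ^ 2 := by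
  have hH : ⟪x, toEuclideanLin H x⟫ ≤ ‖H‖ * ‖x‖ ^ 2 :=
    calc ⟪x, toEuclideanLin H x⟫ ≤ ‖x‖ * ‖toEuclideanLin H x‖ := real_inner_le_norm _ _
      _ ≤ ‖x‖ * (‖H‖ * ‖x‖) := by gcongr; exact H.l2_opNorm_mulVec x
      _ = ‖H‖ * ‖x‖ ^ 2 := by ring
  rw [inner_toEuclideanLin_add_smul_one]
  linarith

end Matrix

theorem mul_sq_le_of_le_mul_sqrt_div {a b θ γ Λ : ℝ} (ha : 0 ≤ a) (hγ : 0 ≤ γ) (hΛ : 0 < Λ)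
    (h : a ≤ θ * √(γ / Λ) * b) : Λ * a ^ 2 ≤ θ ^ 2 * γ * b ^ 2 := by
  have h2 := pow_le_pow_left₀ ha h 2
  rw [mul_pow, mul_pow, Real.sq_sqrt (by positivity)] at h2
  calc Λ * a ^ 2 ≤ Λ * (θ ^ 2 * (γ / Λ) * b ^ 2) := by gcongr
    _ = θ ^ 2 * γ * b ^ 2 := by field_simp

theorem le_mul_of_le_mul_sqrt_div {a b θ γ Λ : ℝ} (hb : 0 ≤ b) (hθ : 0 ≤ θ) (hΛ : 0 ≤ Λ)
    (hγΛ : γ ≤ Λ) (h : a ≤ θ * √(γ / Λ) * b) : a ≤ θ * b :=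
  calc a ≤ θ * √(γ / Λ) * b := h
    _ ≤ θ * 1 * b := by gcongr; exact Real.sqrt_le_one.mpr (div_le_one_of_le₀ hγΛ hΛ)
    _ = θ * b := by ring

theorem lt_of_model_decrease_estimates {η θ γ L Λ M G S D : ℝ} (hη : η < 1) (hθ₀ : 0 ≤ θ)
    (hθ₁ : θ < 1) (hγ : 0 < γ) (hΛ : 0 < Λ) (hΛM : Λ ≤ M) (hG : 0 < G) (hS : 0 ≤ S)
    (hdecrease : (1 - θ ^ 2) * G ^ 2 ≤ Λ * D) (hratio : (1 - η) * D < (L - γ) * S ^ 2)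
    (hstep : γ * S ≤ (1 + θ) * G) :
    (1 - η) * (1 - θ ^ 2) * γ ^ 2 < (1 + θ) ^ 2 * (L - γ) * M ∧ γ < L := by
  have hη' : 0 < 1 - η := sub_pos.mpr hη
  have hθ' : 0 < 1 - θ ^ 2 := by nlinarith
  have hD : 0 < D := pos_of_mul_pos_right ((mul_pos hθ' (pow_pos hG 2)).trans_le hdecrease) hΛ.le
  have hγL : 0 < L - γ := pos_of_mul_pos_left ((mul_pos hη' hD).trans hratio) (sq_nonneg S)
  have hstep_sq : γ ^ 2 * S ^ 2 ≤ (1 + θ) ^ 2 * G ^ 2 := by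
    rw [← mul_pow, ← mul_pow]
    exact pow_le_pow_left₀ (by positivity) hstep 2
  refine ⟨lt_of_mul_lt_mul_right ?_ (sq_nonneg G), sub_pos.mp hγL⟩
  calc (1 - η) * (1 - θ ^ 2) * γ ^ 2 * G ^ 2 = (1 - η) * γ ^ 2 * ((1 - θ ^ 2) * G ^ 2) := by ring
    _ ≤ (1 - η) * γ ^ 2 * (Λ * D) := by gcongr
    _ = Λ * γ ^ 2 * ((1 - η) * D) := by ring
    _ < Λ * γ ^ 2 * ((L - γ) * S ^ 2) := by gcongr
    _ = Λ * (L - γ) * (γ ^ 2 * S ^ 2) := by ring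
    _ ≤ Λ * (L - γ) * ((1 + θ) ^ 2 * G ^ 2) := by gcongr
    _ ≤ M * (L - γ) * ((1 + θ) ^ 2 * G ^ 2) := by gcongr
    _ = (1 + θ) ^ 2 * (L - γ) * M * G ^ 2 := by ring

theorem inexact_unsuccessful_iteration_gamma_bound_general
    (n : ℕ) (f : EuclideanSpace ℝ (Fin n) → ℝ)
    (hf : ContDiff ℝ 1 f)
    (L : ℝ)
    (hLip : ∀ x y : EuclideanSpace ℝ (Fin n), ‖∇ f x - ∇ f y‖ ≤ L * ‖x - y‖)
    (u : EuclideanSpace ℝ (Fin n))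
    (g : EuclideanSpace ℝ (Fin n)) (hg : g = ∇ f u) (hg0 : g ≠ 0)
    (H : Matrix (Fin n) (Fin n) ℝ) (hH : H.PosSemidef)
    (M_H : ℝ) (hHbd : ‖H‖ ≤ M_H)
    (γ : ℝ) (hγ : 0 < γ)
    (η : ℝ) (hη : η ∈ Set.Ioo (0:ℝ) 1)
    (θ : ℝ) (hθ : θ ∈ Set.Ico (0:ℝ) 1)
    (mγ : EuclideanSpace ℝ (Fin n) → ℝ)
    (hmγ : ∀ v, mγ v = f u + ⟪g, v⟫ +
      (1/2) * ⟪v, Matrix.toEuclideanLin (H + γ • (1 : Matrix (Fin n) (Fin n) ℝ)) v⟫)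
    (s t : EuclideanSpace ℝ (Fin n))
    (hstep : Matrix.toEuclideanLin (H + γ • (1 : Matrix (Fin n) (Fin n) ℝ)) s = -g + t)
    (ht : ‖t‖ ≤ θ * Real.sqrt (γ / (‖H‖ + γ)) * ‖g‖)
    (hunsucc : f (u + s) - f u > η * (mγ s - mγ 0)) :
    (1 - η) * (1 - θ^2) * γ^2 < (1 + θ)^2 * (L - γ) * (M_H + γ) ∧ γ < L := by
  set A := toEuclideanLin (H + γ • (1 : Matrix (Fin n) (Fin n) ℝ))
  have hΛ : 0 < ‖H‖ + γ := by positivity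
  have hsymm : A.IsSymmetric :=
    (isPositive_toEuclideanLin_iff.mpr (hH.add (PosSemidef.one.smul hγ.le))).isSymmetric
  have hcoer := hH.mul_sq_norm_le_inner_toEuclideanLin_add_smul_one γ
  have hdecrease := hsymm.sq_norm_le_mul_model_decrease hγ hcoer hΛ
    (H.inner_toEuclideanLin_add_smul_one_le γ) hstep
    (mul_sq_le_of_le_mul_sqrt_div (norm_nonneg t) hγ.le hΛ ht)
  have hs : γ * ‖s‖ ≤ (1 + θ) * ‖g‖ :=
    calc γ * ‖s‖ ≤ ‖A s‖ := A.mul_norm_le_norm_apply_of_coercive hcoer s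
      _ ≤ ‖g‖ + ‖t‖ := by rw [hstep, ← norm_neg g]; exact norm_add_le _ _
      _ ≤ (1 + θ) * ‖g‖ := by
          linarith [le_mul_of_le_mul_sqrt_div (norm_nonneg g) hθ.1 hΛ.le (by simp) ht]
  have hmodel : mγ s - mγ 0 = ⟪g, s⟫ + 1 / 2 * ⟪s, A s⟫ := by
    simp only [hmγ, inner_zero_right, map_zero, mul_zero, add_zero]
    ring
  rw [hmodel] at hunsucc
  subst hg
  have hratio := model_decrease_lt_of_unsuccessful (hf.differentiable one_ne_zero) hLip
    (hcoer s) hunsucc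
  exact lt_of_model_decrease_estimates hη.2 hθ.1 hθ.2 hγ hΛ (by linarith)
    (norm_pos_iff.mpr hg0) (norm_nonneg s) hdecrease hratio hs

/-- If an inexact-step iteration is unsuccessful, then
`(1-η)(1-θ²)γ² < (1+θ)²(L-γ)(M_H+γ)`; in particular `γ < L`. -/
theorem inexact_unsuccessful_iteration_gamma_bound
    (n : ℕ) (f : EuclideanSpace ℝ (Fin n) → ℝ)
    (hf : ContDiff ℝ 1 f)
    (L : ℝ) (hL : 0 < L)
    (hLip : ∀ x y : EuclideanSpace ℝ (Fin n), ‖∇ f x - ∇ f y‖ ≤ L * ‖x - y‖)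
    (u : EuclideanSpace ℝ (Fin n))
    (g : EuclideanSpace ℝ (Fin n)) (hg : g = ∇ f u) (hg0 : g ≠ 0)
    (H : Matrix (Fin n) (Fin n) ℝ) (hH : H.PosSemidef)
    (M_H : ℝ) (hMH : 0 < M_H) (hHbd : ‖H‖ ≤ M_H)
    (γ : ℝ) (hγ : 0 < γ)
    (η : ℝ) (hη : η ∈ Set.Ioo (0:ℝ) 1)
    (θ : ℝ) (hθ : θ ∈ Set.Ico (0:ℝ) 1)
    (mγ : EuclideanSpace ℝ (Fin n) → ℝ)
    (hmγ : ∀ v, mγ v = f u + ⟪g, v⟫ +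
      (1/2) * ⟪v, Matrix.toEuclideanLin (H + γ • (1 : Matrix (Fin n) (Fin n) ℝ)) v⟫)
    (s t : EuclideanSpace ℝ (Fin n))
    (hstep : Matrix.toEuclideanLin (H + γ • (1 : Matrix (Fin n) (Fin n) ℝ)) s = -g + t)
    (ht : ‖t‖ ≤ θ * Real.sqrt (γ / (‖H‖ + γ)) * ‖g‖)
    (hunsucc : f (u + s) - f u > η * (mγ s - mγ 0)) :
    (1 - η) * (1 - θ^2) * γ^2 < (1 + θ)^2 * (L - γ) * (M_H + γ) ∧ γ < L :=
  inexact_unsuccessful_iteration_gamma_bound_general n f hf L hLip u g hg hg0 H hH M_H hHbd γ hγ η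
    hη θ hθ mγ hmγ s t hstep ht hunsucc
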